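/- arXiv:1601.06017 — 6 statements merged into one kernel-verified Lean document; each statement's English description precedes it below -/
import Mathlib

section
/- Every pair (a,b) in C_i × C_i is conjugate by a unit quaternion to a pair of the form (i, e^{kθ} i) for some θ ∈ [0, 2π). -/
open Quaternion Real

noncomputable section

/-- The quaternion unit `i`. -/
def qi : ℍ[ℝ] := ⟨0,1,0,0⟩
/-- The quaternion unit `j`. -/
def qj : ℍ[ℝ] := ⟨0,0,1,0⟩
/-- The quaternion unit `k`. -/
def qk : ℍ[ℝ] := ⟨0,0,0,1⟩
/-- `e^{kθ} = cos θ + k sin θ`. -/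
def ek (θ : ℝ) : ℍ[ℝ] := ⟨Real.cos θ, 0, 0, Real.sin θ⟩
/-- The set of purely imaginary unit quaternions. -/
def Ci : Set ℍ[ℝ] := {q | q.re = 0 ∧ ‖q‖ = 1}

lemma Ci_sq_sum {q : ℍ[ℝ]} (h : q ∈ Ci) :
    q.imI ^ 2 + q.imJ ^ 2 + q.imK ^ 2 = 1 := by
  have h2 : ‖q‖ * ‖q‖ = 1 := by rw [h.2]; ring
  rw [← Quaternion.normSq_eq_norm_mul_self, Quaternion.normSq_def'] at h2
  have h0 := h.1
  nlinarith [h2]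

lemma conj_re_zero (u q : ℍ[ℝ]) (hq : q.re = 0) : (u * q * u⁻¹).re = 0 := by
  rw [Quaternion.inv_def]
  simp [mul_smul_comm, Quaternion.re_smul, hq]
  ring_nf
  tauto

lemma conj_mem_Ci {u q : ℍ[ℝ]} (hu : u ≠ 0) (hq : q ∈ Ci) : u * q * u⁻¹ ∈ Ci := by
  refine ⟨conj_re_zero u q hq.1, ?_⟩
  have hun : ‖u‖ ≠ 0 := norm_ne_zero_iff.mpr hu
  rw [norm_mul, norm_mul, norm_inv, hq.2]
  field_simp

/-- the normal form `b1 i + r j` -/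
def nf (x y : ℝ) : ℍ[ℝ] := ⟨0, x, y, 0⟩

@[simp] lemma qmk_mul_re (a1 a2 a3 a4 : ℝ) (b : ℍ[ℝ]) :
    (@HMul.hMul ℍ[ℝ] ℍ[ℝ] ℍ[ℝ] _ ⟨a1, a2, a3, a4⟩ b).re = a1 * b.re - a2 * b.imI - a3 * b.imJ - a4 * b.imK :=
  Quaternion.re_mul _ _
@[simp] lemma qmk_mul_imI (a1 a2 a3 a4 : ℝ) (b : ℍ[ℝ]) :
    (@HMul.hMul ℍ[ℝ] ℍ[ℝ] ℍ[ℝ] _ ⟨a1, a2, a3, a4⟩ b).imI = a1 * b.imI + a2 * b.re + a3 * b.imK - a4 * b.imJ :=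
  Quaternion.imI_mul _ _
@[simp] lemma qmk_mul_imJ (a1 a2 a3 a4 : ℝ) (b : ℍ[ℝ]) :
    (@HMul.hMul ℍ[ℝ] ℍ[ℝ] ℍ[ℝ] _ ⟨a1, a2, a3, a4⟩ b).imJ = a1 * b.imJ - a2 * b.imK + a3 * b.re + a4 * b.imI :=
  Quaternion.imJ_mul _ _
@[simp] lemma qmk_mul_imK (a1 a2 a3 a4 : ℝ) (b : ℍ[ℝ]) :
    (@HMul.hMul ℍ[ℝ] ℍ[ℝ] ℍ[ℝ] _ ⟨a1, a2, a3, a4⟩ b).imK = a1 * b.imK + a2 * b.imJ - a3 * b.imI + a4 * b.re :=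
  Quaternion.imK_mul _ _
@[simp] lemma qmk_mk_re (a1 a2 a3 a4 b1 b2 b3 b4 : ℝ) :
    (@HMul.hMul ℍ[ℝ] ℍ[ℝ] ℍ[ℝ] _ ⟨a1, a2, a3, a4⟩ ⟨b1, b2, b3, b4⟩).re = a1 * b1 - a2 * b2 - a3 * b3 - a4 * b4 :=
  Quaternion.re_mul _ _
@[simp] lemma qmk_mk_imI (a1 a2 a3 a4 b1 b2 b3 b4 : ℝ) :
    (@HMul.hMul ℍ[ℝ] ℍ[ℝ] ℍ[ℝ] _ ⟨a1, a2, a3, a4⟩ ⟨b1, b2, b3, b4⟩).imI = a1 * b2 + a2 * b1 + a3 * b4 - a4 * b3 :=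
  Quaternion.imI_mul _ _
@[simp] lemma qmk_mk_imJ (a1 a2 a3 a4 b1 b2 b3 b4 : ℝ) :
    (@HMul.hMul ℍ[ℝ] ℍ[ℝ] ℍ[ℝ] _ ⟨a1, a2, a3, a4⟩ ⟨b1, b2, b3, b4⟩).imJ = a1 * b3 - a2 * b4 + a3 * b1 + a4 * b2 :=
  Quaternion.imJ_mul _ _
@[simp] lemma qmk_mk_imK (a1 a2 a3 a4 b1 b2 b3 b4 : ℝ) :
    (@HMul.hMul ℍ[ℝ] ℍ[ℝ] ℍ[ℝ] _ ⟨a1, a2, a3, a4⟩ ⟨b1, b2, b3, b4⟩).imK = a1 * b4 + a2 * b3 - a3 * b2 + a4 * b1 :=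
  Quaternion.imK_mul _ _

lemma rot_step (q : ℍ[ℝ]) (hq : q.re = 0) (r : ℝ) (hr0 : 0 ≤ r)
    (hr2 : r ^ 2 = q.imJ ^ 2 + q.imK ^ 2) :
    ∃ v : ℍ[ℝ], v ≠ 0 ∧ v * qi = qi * v ∧ v * q = nf q.imI r * v := by
  rcases eq_or_lt_of_le hr0 with hr | hr
  · have h2 : q.imJ = 0 := by nlinarith
    have h3 : q.imK = 0 := by nlinarith
    refine ⟨1, one_ne_zero, by rw [one_mul, mul_one], ?_⟩
    rw [one_mul, mul_one]
    ext <;> simp [nf, hq, h2, h3, ← hr]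
  · by_cases hb2 : 0 ≤ q.imJ
    · refine ⟨⟨q.imJ + r, -q.imK, 0, 0⟩, ?_, ?_, ?_⟩
      · intro h
        have := congrArg QuaternionAlgebra.re h
        simp at this
        linarith
      · ext <;> simp [qi]
      · ext <;> simp [nf, hq] <;> nlinarith [hr2]
    · refine ⟨⟨q.imK, q.imJ - r, 0, 0⟩, ?_, ?_, ?_⟩
      · intro h
        have := congrArg QuaternionAlgebra.imI h
        simp at this
        linarith
      · ext <;> simp [qi]
      · ext <;> simp [nf, hq] <;> nlinarith [hr2]

lemma conj_eq (u c q : ℍ[ℝ]) (hu : u ≠ 0) (h : u * q = c * u) : u * q * u⁻¹ = c := by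
  rw [mul_inv_eq_iff_eq_mul₀ hu, h]

/-- Every pair in `C_i × C_i` is simultaneously conjugate to a pair `(i, e^{kθ} i)`
with `θ ∈ [0, 2π)`. -/
theorem pair_conj_normal_form (a b : ℍ[ℝ]) (ha : a ∈ Ci) (hb : b ∈ Ci) :
    ∃ (u : ℍ[ℝ]) (θ : ℝ), ‖u‖ = 1 ∧ 0 ≤ θ ∧ θ < 2 * π ∧
      u * a * u⁻¹ = qi ∧ u * b * u⁻¹ = ek θ * qi := by
  have ha0 := ha.1
  have ha1 := Ci_sq_sum ha
  -- Step A: find w0 ≠ 0 with w0 * a = qi * w0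
  obtain ⟨w0, hw0, hw0a⟩ : ∃ w0 : ℍ[ℝ], w0 ≠ 0 ∧ w0 * a = qi * w0 := by
    by_cases hA : a = ⟨0,-1,0,0⟩
    · refine ⟨qj, ?_, ?_⟩
      · intro h
        have := congrArg QuaternionAlgebra.imJ h
        simp [qj] at this
      · subst hA; ext <;> simp [qi, qj]
    · refine ⟨1 - qi * a, ?_, ?_⟩
      · intro h
        apply hA
        have hre := congrArg QuaternionAlgebra.re h
        have hI := congrArg QuaternionAlgebra.imI h
        have hJ := congrArg QuaternionAlgebra.imJ h
        have hK := congrArg QuaternionAlgebra.imK h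
        simp [qi, ha0] at hre hI hJ hK
        ext <;> simp [ha0] <;> linarith
      · ext <;> simp [qi, ha0] <;> nlinarith [ha1]
  -- Step B: b' := conjugate of b
  set b' : ℍ[ℝ] := w0 * b * w0⁻¹ with hb'def
  have hb' : b' ∈ Ci := conj_mem_Ci hw0 hb
  have hw0b : w0 * b = b' * w0 := by
    rw [hb'def, mul_assoc, inv_mul_cancel₀ hw0, mul_one]
  have hb'0 := hb'.1
  have hb'1 := Ci_sq_sum hb'
  set b1 := b'.imI
  set b2 := b'.imJ
  set b3 := b'.imK
  set r : ℝ := Real.sqrt (b2 ^ 2 + b3 ^ 2) with hrdef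
  have hr0 : 0 ≤ r := Real.sqrt_nonneg _
  have hr2 : r ^ 2 = b2 ^ 2 + b3 ^ 2 := Real.sq_sqrt (by positivity)
  have hb1r : b1 ^ 2 + r ^ 2 = 1 := by rw [hr2]; linarith [hb'1]
  -- Step C: find v ≠ 0 commuting with qi, with v * b' = c * v
  obtain ⟨v, hv, hvqi, hvb⟩ := rot_step b' hb'0 r hr0 hr2
  set c : ℍ[ℝ] := nf b1 r with hcdef
  -- Step D: θ
  have hb1le : b1 ^ 2 ≤ 1 := by nlinarith [hb1r]
  have hb1m : -1 ≤ b1 := by nlinarith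
  have hb1M : b1 ≤ 1 := by nlinarith
  set θ := Real.arccos b1 with hθdef
  have hcos : Real.cos θ = b1 := Real.cos_arccos hb1m hb1M
  have hsin : Real.sin θ = r := by
    rw [hθdef, Real.sin_arccos]
    have : 1 - b1 ^ 2 = r ^ 2 := by linarith
    rw [this, Real.sqrt_sq hr0]
  have hek : ek θ * qi = c := by
    ext <;> simp [hcdef, nf, ek, qi, hcos, hsin]
  -- Step E: assemble
  set w : ℍ[ℝ] := v * w0 with hwdef
  have hw : w ≠ 0 := mul_ne_zero hv hw0
  have hwa : w * a = qi * w := by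
    rw [hwdef, mul_assoc, hw0a, ← mul_assoc, hvqi, mul_assoc]
  have hwb : w * b = (ek θ * qi) * w := by
    rw [hek, hwdef, mul_assoc, hw0b, ← mul_assoc, hvb, mul_assoc]
  have hwn : ‖w‖ ≠ 0 := norm_ne_zero_iff.mpr hw
  refine ⟨‖w‖⁻¹ • w, θ, ?_, Real.arccos_nonneg b1, ?_, ?_, ?_⟩
  · rw [norm_smul]
    simp [abs_of_nonneg (norm_nonneg w), hwn]
  · have := Real.arccos_le_pi b1
    have hπ := Real.pi_pos
    linarith
  · apply conj_eq _ _ _ (smul_ne_zero (inv_ne_zero hwn) hw)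
    rw [smul_mul_assoc, hwa, mul_smul_comm]
  · apply conj_eq _ _ _ (smul_ne_zero (inv_ne_zero hwn) hw)
    rw [smul_mul_assoc, hwb, mul_smul_comm]
end
end

section
/- Two quadruples g(θ₁,θ₂) and g(θ₁',θ₂') (with θᵢ, θᵢ' ∈ [0,2π)) are conjugate by a unit quaternion if and only if (θ₁',θ₂') = (θ₁,θ₂) or (θ₁',θ₂') = (2π−θ₁, 2π−θ₂) (mod 2π); i.e., the parameterization of the pillowcase by the torus is two-to-one away from the points with θ₁,θ₂ ∈ {0,π}. -/
open Quaternion Real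

noncomputable section

/-- `g(θ₁,θ₂)` as a quadruple of quaternions. -/
def g (θ₁ θ₂ : ℝ) : ℍ[ℝ] × ℍ[ℝ] × ℍ[ℝ] × ℍ[ℝ] :=
  (qi, ek θ₁ * qi, ek (θ₂ - θ₁) * qi, ek θ₂ * qi)

/-- Two reals in `[0, 2π)` mapping to the same angle are equal. -/
lemma angle_inj' {θ θ' : ℝ} (h : 0 ≤ θ) (h' : θ < 2*π) (k : 0 ≤ θ') (k' : θ' < 2*π)
    (e : (θ : Real.Angle) = θ') : θ = θ' := by
  rw [Real.Angle.angle_eq_iff_two_pi_dvd_sub] at e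
  obtain ⟨n, hn⟩ := e
  have hπ := Real.pi_pos
  have h1 : |θ - θ'| < 2*π := by rw [abs_sub_lt_iff]; constructor <;> linarith
  rw [hn, abs_mul, abs_of_pos (by linarith : (0:ℝ) < 2*π)] at h1
  have : |(n:ℝ)| < 1 := by
    by_contra hc
    push_neg at hc
    nlinarith
  have hn0 : n = 0 := by
    rcases eq_or_ne n 0 with h0 | h0
    · exact h0
    · exfalso
      have : (1:ℝ) ≤ |(n:ℝ)| := by exact_mod_cast Int.one_le_abs h0
      linarith
  rw [hn0] at hn
  push_cast at hn
  linarith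

/-- Two quadruples `g(θ₁,θ₂)` and `g(θ₁',θ₂')` with parameters in `[0,2π)` are diagonally
conjugate by a unit quaternion iff `(θ₁',θ₂') = (θ₁,θ₂)` or
`(θ₁',θ₂') ≡ (−θ₁,−θ₂) (mod 2π)`: the torus parameterization of the pillowcase is
two-to-one away from the points with `θ₁, θ₂ ∈ {0, π}`. -/
theorem g_conj_iff (θ₁ θ₂ θ₁' θ₂' : ℝ)
    (h₁ : 0 ≤ θ₁) (h₁' : θ₁ < 2 * π) (h₂ : 0 ≤ θ₂) (h₂' : θ₂ < 2 * π)
    (h₃ : 0 ≤ θ₁') (h₃' : θ₁' < 2 * π) (h₄ : 0 ≤ θ₂') (h₄' : θ₂' < 2 * π) :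
    (∃ u : ℍ[ℝ], ‖u‖ = 1 ∧
        u * (g θ₁ θ₂).1 * u⁻¹ = (g θ₁' θ₂').1 ∧
        u * (g θ₁ θ₂).2.1 * u⁻¹ = (g θ₁' θ₂').2.1 ∧
        u * (g θ₁ θ₂).2.2.1 * u⁻¹ = (g θ₁' θ₂').2.2.1 ∧
        u * (g θ₁ θ₂).2.2.2 * u⁻¹ = (g θ₁' θ₂').2.2.2) ↔
      ((θ₁' = θ₁ ∧ θ₂' = θ₂) ∨
        ((θ₁' : Real.Angle) = -(θ₁ : Real.Angle) ∧
         (θ₂' : Real.Angle) = -(θ₂ : Real.Angle))) := by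
  constructor
  · rintro ⟨u, hu, e1, e2, _, e4⟩
    have hu0 : u ≠ 0 := by intro h; rw [h, norm_zero] at hu; norm_num at hu
    simp only [g] at e1 e2 e4
    rw [mul_inv_eq_iff_eq_mul₀ hu0] at e1 e2 e4
    rw [Quaternion.ext_iff] at e1 e2 e4
    simp only [Quaternion.re_mul, Quaternion.imI_mul, Quaternion.imJ_mul,
      Quaternion.imK_mul] at e1 e2 e4
    simp only [ek, qi] at e1 e2 e4
    obtain ⟨p1, p2, p3, p4⟩ := e1
    obtain ⟨a1, a2, a3, a4⟩ := e2
    obtain ⟨b1, b2, b3, b4⟩ := e4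
    ring_nf at p1 p2 p3 p4 a1 a2 a3 a4 b1 b2 b3 b4
    have hn : u.re^2 + u.imI^2 + u.imJ^2 + u.imK^2 = 1 := by
      have h1 := Quaternion.normSq_eq_norm_mul_self u
      rw [hu, Quaternion.normSq_def'] at h1
      linarith [h1]
    have hJ : u.imJ = 0 := by linarith
    have hK : u.imK = 0 := by linarith
    rcases eq_or_ne u.re 0 with hre | hre
    · right
      have hI : u.imI ≠ 0 := by
        intro h; rw [hre, h, hJ, hK] at hn; norm_num at hn
      have c1 : Real.cos θ₁' = Real.cos (-θ₁) := by
        rw [Real.cos_neg]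
        exact (mul_left_cancel₀ hI (by
          linear_combination -a1 + (Real.sin θ₁' - Real.sin θ₁) * hJ)).symm
      have s1 : Real.sin θ₁' = Real.sin (-θ₁) := by
        rw [Real.sin_neg]
        have := mul_left_cancel₀ hI (show u.imI * Real.sin θ₁' = u.imI * (-Real.sin θ₁) by
          linear_combination a4 + (Real.cos θ₁ + Real.cos θ₁') * hJ)
        linarith
      have c2 : Real.cos θ₂' = Real.cos (-θ₂) := by
        rw [Real.cos_neg]
        exact (mul_left_cancel₀ hI (by
          linear_combination -b1 + (Real.sin θ₂' - Real.sin θ₂) * hJ)).symm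
      have s2 : Real.sin θ₂' = Real.sin (-θ₂) := by
        rw [Real.sin_neg]
        have := mul_left_cancel₀ hI (show u.imI * Real.sin θ₂' = u.imI * (-Real.sin θ₂) by
          linear_combination b4 + (Real.cos θ₂ + Real.cos θ₂') * hJ)
        linarith
      constructor
      · rw [← Real.Angle.coe_neg]; exact Real.Angle.cos_sin_inj c1 s1
      · rw [← Real.Angle.coe_neg]; exact Real.Angle.cos_sin_inj c2 s2
    · left
      have c1 : Real.cos θ₁' = Real.cos θ₁ := by
        exact (mul_left_cancel₀ hre (by
          linear_combination a2 + (Real.sin θ₁ + Real.sin θ₁') * hK)).symm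
      have s1 : Real.sin θ₁' = Real.sin θ₁ := by
        exact (mul_left_cancel₀ hre (by
          linear_combination a3 - (Real.cos θ₁ + Real.cos θ₁') * hK)).symm
      have c2 : Real.cos θ₂' = Real.cos θ₂ := by
        exact (mul_left_cancel₀ hre (by
          linear_combination b2 + (Real.sin θ₂ + Real.sin θ₂') * hK)).symm
      have s2 : Real.sin θ₂' = Real.sin θ₂ := by
        exact (mul_left_cancel₀ hre (by
          linear_combination b3 - (Real.cos θ₂ + Real.cos θ₂') * hK)).symm
      exact ⟨(angle_inj' h₃ h₃' h₁ h₁' (Real.Angle.cos_sin_inj c1 s1)),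
             (angle_inj' h₄ h₄' h₂ h₂' (Real.Angle.cos_sin_inj c2 s2))⟩
  · rintro (⟨rfl, rfl⟩ | ⟨ha, hb⟩)
    · refine ⟨1, norm_one, ?_, ?_, ?_, ?_⟩ <;> simp
    · have c1 : Real.cos θ₁' = Real.cos θ₁ := by
        simpa [Real.Angle.cos_coe] using congrArg Real.Angle.cos ha
      have s1 : Real.sin θ₁' = -Real.sin θ₁ := by
        simpa [Real.Angle.sin_coe] using congrArg Real.Angle.sin ha
      have c2 : Real.cos θ₂' = Real.cos θ₂ := by
        simpa [Real.Angle.cos_coe] using congrArg Real.Angle.cos hb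
      have s2 : Real.sin θ₂' = -Real.sin θ₂ := by
        simpa [Real.Angle.sin_coe] using congrArg Real.Angle.sin hb
      have hq1 : ‖qi‖ = 1 := by
        have h1 : Quaternion.normSq qi = 1 := by
          rw [Quaternion.normSq_def']; simp [qi]
        have h2 := Quaternion.normSq_eq_norm_mul_self qi
        nlinarith [norm_nonneg qi]
      have hq0 : qi ≠ 0 := by intro h; rw [h, norm_zero] at hq1; norm_num at hq1
      refine ⟨qi, hq1, ?_, ?_, ?_, ?_⟩ <;>
      · rw [mul_inv_eq_iff_eq_mul₀ hq0]
        simp only [g]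
        try
          rw [Quaternion.ext_iff]
          simp only [Quaternion.re_mul, Quaternion.imI_mul, Quaternion.imJ_mul,
            Quaternion.imK_mul]
          simp only [ek, qi, Real.cos_sub, Real.sin_sub]
          refine ⟨?_, ?_, ?_, ?_⟩ <;> · simp only [c1, s1, c2, s2]; ring
end
end

section
/- The quadruple g(θ₁,θ₂) = (i, e^{kθ₁}i, e^{k(θ₂−θ₁)}i, e^{kθ₂}i) is fixed by conjugation by some unit quaternion other than ±1 if and only if θ₁, θ₂ ∈ {0, π} (mod 2π). -/
open Quaternion Real

noncomputable section

lemma conj_eq_iff_comm (u q : ℍ[ℝ]) (hu : u ≠ 0) :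
    u * q * u⁻¹ = q ↔ u * q = q * u := by
  rw [mul_inv_eq_iff_eq_mul₀ hu]

lemma comm_qi_iff (u : ℍ[ℝ]) (h : u * qi = qi * u) : u.imJ = 0 ∧ u.imK = 0 := by
  rw [Quaternion.ext_iff] at h
  simp only [Quaternion.re_mul, Quaternion.imI_mul, Quaternion.imJ_mul, Quaternion.imK_mul] at h
  simp only [Quaternion.re_mul, Quaternion.imI_mul, Quaternion.imJ_mul,
    Quaternion.imK_mul, qi] at h
  obtain ⟨h1, h2, h3, h4⟩ := h
  constructor <;> linarith

lemma comm_ek_qi (u : ℍ[ℝ]) (θ : ℝ) (hj : u.imJ = 0) (hk : u.imK = 0)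
    (h : u * (ek θ * qi) = (ek θ * qi) * u) : u.imI * Real.sin θ = 0 := by
  rw [Quaternion.ext_iff] at h
  simp only [Quaternion.re_mul, Quaternion.imI_mul, Quaternion.imJ_mul, Quaternion.imK_mul] at h
  simp only [Quaternion.re_mul, Quaternion.imI_mul, Quaternion.imJ_mul,
    Quaternion.imK_mul, qi, ek, hj, hk] at h
  obtain ⟨h1, h2, h3, h4⟩ := h
  nlinarith [h1, h2, h3, h4]

lemma angle_of_sin (θ : ℝ) (h : Real.sin θ = 0) :
    (θ : Real.Angle) = 0 ∨ (θ : Real.Angle) = (π : ℝ) := by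
  rw [← Real.Angle.sin_eq_zero_iff]; simpa using h

lemma sin_of_angle (θ : ℝ) (h : (θ : Real.Angle) = 0 ∨ (θ : Real.Angle) = (π : ℝ)) :
    Real.sin θ = 0 := by
  have := Real.Angle.sin_eq_zero_iff.mpr h
  simpa using this

/-- `g(θ₁,θ₂)` is fixed by diagonal conjugation by some unit quaternion other than `±1`
iff `θ₁, θ₂ ∈ {0, π} (mod 2π)`. -/
theorem g_has_nontrivial_stabilizer_iff (θ₁ θ₂ : ℝ) :
    (∃ u : ℍ[ℝ], ‖u‖ = 1 ∧ u ≠ 1 ∧ u ≠ -1 ∧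
        u * (g θ₁ θ₂).1 * u⁻¹ = (g θ₁ θ₂).1 ∧
        u * (g θ₁ θ₂).2.1 * u⁻¹ = (g θ₁ θ₂).2.1 ∧
        u * (g θ₁ θ₂).2.2.1 * u⁻¹ = (g θ₁ θ₂).2.2.1 ∧
        u * (g θ₁ θ₂).2.2.2 * u⁻¹ = (g θ₁ θ₂).2.2.2) ↔
      (((θ₁ : Real.Angle) = 0 ∨ (θ₁ : Real.Angle) = (π : ℝ)) ∧
       ((θ₂ : Real.Angle) = 0 ∨ (θ₂ : Real.Angle) = (π : ℝ))) := by
  constructor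
  · rintro ⟨u, hn, h1, hm1, hi, hA, hB, hC⟩
    have hu0 : u ≠ 0 := by
      intro h; rw [h] at hn; simp at hn
    rw [conj_eq_iff_comm _ _ hu0] at hi hA hB hC
    simp only [g] at hi hA hB hC
    obtain ⟨hj, hk⟩ := comm_qi_iff u hi
    have e1 := comm_ek_qi u θ₁ hj hk hA
    have e2 := comm_ek_qi u θ₂ hj hk hC
    have hsq : u.re ^ 2 + u.imI ^ 2 + u.imJ ^ 2 + u.imK ^ 2 = 1 := by
      have := Quaternion.normSq_eq_norm_mul_self u
      rw [hn] at this
      rw [Quaternion.normSq_def'] at this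
      linarith
    have hb : u.imI ≠ 0 := by
      intro hb
      rw [hb, hj, hk] at hsq
      have : (u.re - 1) * (u.re + 1) = 0 := by nlinarith
      rcases mul_eq_zero.mp this with h | h
      · exact h1 (by
          rw [Quaternion.ext_iff]
          simp only [Quaternion.re_one, Quaternion.imI_one, Quaternion.imJ_one, Quaternion.imK_one]
          refine ⟨by linarith, hb, hj, hk⟩)
      · exact hm1 (by
          rw [Quaternion.ext_iff]
          simp only [Quaternion.re_neg, Quaternion.imI_neg, Quaternion.imJ_neg, Quaternion.imK_neg,
            Quaternion.re_one, Quaternion.imI_one, Quaternion.imJ_one, Quaternion.imK_one]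
          refine ⟨by linarith, by simpa using hb, by simpa using hj, by simpa using hk⟩)
    have hs1 : Real.sin θ₁ = 0 := by
      rcases mul_eq_zero.mp e1 with h | h
      · exact absurd h hb
      · exact h
    have hs2 : Real.sin θ₂ = 0 := by
      rcases mul_eq_zero.mp e2 with h | h
      · exact absurd h hb
      · exact h
    exact ⟨angle_of_sin _ hs1, angle_of_sin _ hs2⟩
  · rintro ⟨h1, h2⟩
    have hs1 : Real.sin θ₁ = 0 := sin_of_angle _ h1
    have hs2 : Real.sin θ₂ = 0 := sin_of_angle _ h2
    have hs3 : Real.sin (θ₂ - θ₁) = 0 := by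
      rw [Real.sin_sub, hs1, hs2]; ring
    have hqi0 : qi ≠ 0 := by
      intro h
      have := congrArg QuaternionAlgebra.imI h
      simp [qi] at this
    have hnorm : ‖qi‖ = 1 := by
      have h2 : Quaternion.normSq qi = ‖qi‖ * ‖qi‖ := Quaternion.normSq_eq_norm_mul_self qi
      have h3 : Quaternion.normSq qi = 1 := by
        rw [Quaternion.normSq_def']; simp [qi]
      nlinarith [norm_nonneg qi]
    have hcomm : ∀ θ : ℝ, Real.sin θ = 0 → qi * (ek θ * qi) = (ek θ * qi) * qi := by
      intro θ hs
      rw [Quaternion.ext_iff]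
      simp only [Quaternion.re_mul, Quaternion.imI_mul, Quaternion.imJ_mul, Quaternion.imK_mul]
      simp only [Quaternion.re_mul, Quaternion.imI_mul, Quaternion.imJ_mul,
        Quaternion.imK_mul, qi, ek, hs]
      refine ⟨by ring, by ring, by ring, by ring⟩
    refine ⟨qi, hnorm, ?_, ?_, ?_, ?_, ?_, ?_⟩
    · intro h
      have := congrArg QuaternionAlgebra.imI h
      simp [qi] at this
    · intro h
      have := congrArg QuaternionAlgebra.imI h
      simp [qi] at this
    · rw [conj_eq_iff_comm _ _ hqi0]; rfl
    · rw [conj_eq_iff_comm _ _ hqi0]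
      exact hcomm θ₁ hs1
    · rw [conj_eq_iff_comm _ _ hqi0]
      exact hcomm (θ₂ - θ₁) hs3
    · rw [conj_eq_iff_comm _ _ hqi0]
      exact hcomm θ₂ hs2
end
end

section
/- Every fixed point (X,Y) ∈ SU(2)² of εσ : (X,Y) ↦ (−Y⁻¹XY, −Y⁻¹X⁻¹YXY) satisfies tr(X) = 0 and tr(Y) = 0, i.e., X and Y are purely imaginary unit quaternions. -/
open Quaternion Real

noncomputable section

/-- Every fixed point `(X,Y)` of `εσ : (X,Y) ↦ (−Y⁻¹XY, −Y⁻¹X⁻¹YXY)` in `SU(2)²`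
consists of traceless (purely imaginary) unit quaternions. -/
theorem fixed_point_traceless (X Y : ℍ[ℝ]) (hX : ‖X‖ = 1) (hY : ‖Y‖ = 1)
    (h1 : -(Y⁻¹ * X * Y) = X) (h2 : -(Y⁻¹ * X⁻¹ * Y * X * Y) = Y) :
    X.re = 0 ∧ Y.re = 0 := by
  have hY0 : Y ≠ 0 := by
    intro h; rw [h, norm_zero] at hY; norm_num at hY
  have hanti : X * Y = -(Y * X) := by
    have h1' : Y⁻¹ * X * Y = -X := neg_eq_iff_eq_neg.mp h1
    calc X * Y = Y * (Y⁻¹ * X * Y) := by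
          rw [← mul_assoc, ← mul_assoc, mul_inv_cancel₀ hY0, one_mul]
      _ = -(Y * X) := by rw [h1', mul_neg]
  have hnX : X.re^2 + X.imI^2 + X.imJ^2 + X.imK^2 = 1 := by
    have := Quaternion.normSq_eq_norm_mul_self X
    rw [hX] at this
    simp [Quaternion.normSq_def'] at this
    nlinarith [this]
  have hnY : Y.re^2 + Y.imI^2 + Y.imJ^2 + Y.imK^2 = 1 := by
    have := Quaternion.normSq_eq_norm_mul_self Y
    rw [hY] at this
    simp [Quaternion.normSq_def'] at this
    nlinarith [this]
  have e0 := congrArg QuaternionAlgebra.re hanti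
  have e1 := congrArg QuaternionAlgebra.imI hanti
  have e2 := congrArg QuaternionAlgebra.imJ hanti
  have e3 := congrArg QuaternionAlgebra.imK hanti
  simp [Quaternion.re_mul, Quaternion.imI_mul, Quaternion.imJ_mul,
    Quaternion.imK_mul] at e0 e1 e2 e3
  constructor
  · linear_combination (-X.re)*hnY + (Y.re/2)*e0 + (Y.imI/2)*e1 + (Y.imJ/2)*e2 + (Y.imK/2)*e3
  · linear_combination (-Y.re)*hnX + (X.re/2)*e0 + (X.imI/2)*e1 + (X.imJ/2)*e2 + (X.imK/2)*e3
end
end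

section
/- Up to simultaneous conjugation by a unit quaternion, the unique fixed point of εσ : (X,Y) ↦ (−Y⁻¹XY, −Y⁻¹X⁻¹YXY) on SU(2)² is (i, j); that is, every fixed point is conjugate to (i,j). -/
open Quaternion Real

noncomputable section

lemma re_mul_comm (a b : ℍ[ℝ]) : (a * b).re = (b * a).re := by
  simp only [Quaternion.re_mul]; ring

lemma pure_sq (z : ℍ[ℝ]) (h0 : z.re = 0) (h1 : ‖z‖ = 1) : z * z = -1 := by
  have hs : star z = -z := Quaternion.star_eq_neg.mpr h0
  have hn : z * star z = 1 := by
    rw [Quaternion.self_mul_star]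
    have h2 : normSq z = ‖z‖ * ‖z‖ := Quaternion.normSq_eq_norm_mul_self z
    rw [h2, h1]; norm_num
  rw [hs, mul_neg] at hn
  exact neg_eq_iff_eq_neg.mp hn

lemma qi_sq : qi * qi = -1 := by
  ext <;> simp [Quaternion.re_mul, Quaternion.imI_mul, Quaternion.imJ_mul,
    Quaternion.imK_mul] <;> simp [qi]

lemma qj_sq : qj * qj = -1 := by
  ext <;> simp [Quaternion.re_mul, Quaternion.imI_mul, Quaternion.imJ_mul,
    Quaternion.imK_mul] <;> simp [qj]

lemma qij_anticomm : qj * qi = -(qi * qj) := by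
  ext <;> simp [Quaternion.re_mul, Quaternion.imI_mul, Quaternion.imJ_mul,
    Quaternion.imK_mul] <;> simp [qi, qj]

lemma qi_ne : qi ≠ 0 := by
  intro h
  have := congrArg QuaternionAlgebra.imI h
  simp [qi] at this

lemma qj_ne : qj ≠ 0 := by
  intro h
  have := congrArg QuaternionAlgebra.imJ h
  simp [qj] at this

lemma conjMulConj (u a b : ℍ[ℝ]) (hu : u ≠ 0) :
    (u * a * u⁻¹) * (u * b * u⁻¹) = u * (a * b) * u⁻¹ := by
  simp [mul_assoc, inv_mul_cancel_left₀ hu]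

lemma conj_smul (w a b : ℍ[ℝ]) (hw : w ≠ 0) (h : w * a = b * w) :
    (‖w‖⁻¹ • w) * a * (‖w‖⁻¹ • w)⁻¹ = b := by
  have hr : (‖w‖ : ℝ) ≠ 0 := norm_ne_zero_iff.mpr hw
  have hinv : (‖w‖⁻¹ • w)⁻¹ = ‖w‖ • w⁻¹ := by
    apply inv_eq_of_mul_eq_one_right
    rw [smul_mul_smul_comm, inv_mul_cancel₀ hr, mul_inv_cancel₀ hw, one_smul]
  rw [hinv, smul_mul_assoc, mul_smul_comm, smul_mul_assoc, smul_smul,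
    mul_inv_cancel₀ hr, one_smul, h, mul_assoc, mul_inv_cancel₀ hw, mul_one]

/-- Given `e² = -1`, `x² = -1`, find a nonzero `u` with `u x = e u`. -/
lemma step (e x : ℍ[ℝ]) (he : e * e = -1) (hx : x * x = -1) (hene : e ≠ 0)
    (f : ℍ[ℝ]) (hf0 : f ≠ 0) (hf : f * (-e) = e * f) :
    ∃ u : ℍ[ℝ], u ≠ 0 ∧ u * x = e * u ∧ (u = f ∨ u = 1 - e * x) := by
  by_cases hc : (1 : ℍ[ℝ]) - e * x = 0
  · refine ⟨f, hf0, ?_, Or.inl rfl⟩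
    have h' : (1 : ℍ[ℝ]) = e * x := sub_eq_zero.mp hc
    have hxe : x = -e := by
      apply mul_left_cancel₀ hene
      rw [← h', mul_neg, he, neg_neg]
    rw [hxe]; exact hf
  · refine ⟨1 - e * x, hc, ?_, Or.inr rfl⟩
    have l1 : (1 - e * x) * x = x + e := by
      rw [sub_mul, one_mul, mul_assoc, hx, mul_neg_one, sub_neg_eq_add]
    have l2 : e * (1 - e * x) = e + x := by
      rw [mul_sub, mul_one, ← mul_assoc, he, neg_one_mul, sub_neg_eq_add]
    rw [l1, l2, add_comm]

/-- Every fixed point of `εσ : (X,Y) ↦ (−Y⁻¹XY, −Y⁻¹X⁻¹YXY)` on `SU(2)²` is conjugate,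
by simultaneous conjugation by a unit quaternion, to `(i, j)`. -/
theorem fixed_point_unique_up_to_conj (X Y : ℍ[ℝ]) (hX : ‖X‖ = 1) (hY : ‖Y‖ = 1)
    (h1 : -(Y⁻¹ * X * Y) = X) (h2 : -(Y⁻¹ * X⁻¹ * Y * X * Y) = Y) :
    ∃ u : ℍ[ℝ], ‖u‖ = 1 ∧ u * X * u⁻¹ = qi ∧ u * Y * u⁻¹ = qj := by
  have hX0 : X ≠ 0 := by intro h; rw [h, norm_zero] at hX; exact one_ne_zero hX.symm
  have hY0 : Y ≠ 0 := by intro h; rw [h, norm_zero] at hY; exact one_ne_zero hY.symm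
  -- anticommutation
  have hac : X * Y = -(Y * X) := by
    have h1' := congrArg (Y * ·) h1
    rw [mul_neg, ← mul_assoc, ← mul_assoc, mul_inv_cancel₀ hY0, one_mul] at h1'
    rw [← h1', neg_neg]
  have hac' : Y * X = -(X * Y) := by rw [hac, neg_neg]
  -- purity
  have hXre : X.re = 0 := by
    have e1 : (Y⁻¹ * X * Y).re = X.re := by
      rw [re_mul_comm, ← mul_assoc, mul_inv_cancel₀ hY0, one_mul]
    have e2 := congrArg QuaternionAlgebra.re h1
    rw [Quaternion.re_neg, e1] at e2
    linarith
  have hYre : Y.re = 0 := by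
    have e0 : X⁻¹ * (Y * X) = -Y := by
      rw [hac', mul_neg, ← mul_assoc, inv_mul_cancel₀ hX0, one_mul]
    have e1 : (X⁻¹ * (Y * X)).re = Y.re := by
      rw [re_mul_comm, mul_assoc, mul_inv_cancel₀ hX0, mul_one]
    rw [e0, Quaternion.re_neg] at e1
    linarith
  have hX2 := pure_sq X hXre hX
  have hY2 := pure_sq Y hYre hY
  -- step 1: conjugate X to qi
  have hfj : qj * (-qi) = qi * qj := by
    ext <;> simp [Quaternion.re_mul, Quaternion.imI_mul, Quaternion.imJ_mul,
      Quaternion.imK_mul] <;> simp [qi, qj]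
  obtain ⟨u1, hu10, hu1, -⟩ := step qi X qi_sq hX2 qi_ne qj qj_ne hfj
  set Y1 := u1 * Y * u1⁻¹ with hY1def
  have hX1 : u1 * X * u1⁻¹ = qi := by rw [hu1, mul_assoc, mul_inv_cancel₀ hu10, mul_one]
  have hY1sq : Y1 * Y1 = -1 := by
    rw [hY1def, conjMulConj _ _ _ hu10, hY2, mul_neg_one, neg_mul, mul_inv_cancel₀ hu10]
  have hY1i : Y1 * qi = -(qi * Y1) := by
    have l1 : Y1 * qi = u1 * (Y * X) * u1⁻¹ := by
      rw [← hX1, hY1def, conjMulConj _ _ _ hu10]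
    have l2 : qi * Y1 = u1 * (X * Y) * u1⁻¹ := by
      rw [← hX1, hY1def, conjMulConj _ _ _ hu10]
    rw [l1, l2, hac', mul_neg, neg_mul]
  -- step 2: conjugate Y1 to qj, fixing qi
  have hfi : qi * (-qj) = qj * qi := by
    ext <;> simp [Quaternion.re_mul, Quaternion.imI_mul, Quaternion.imJ_mul,
      Quaternion.imK_mul] <;> simp [qi, qj]
  obtain ⟨u2, hu20, hu2, hcase⟩ := step qj Y1 qj_sq hY1sq qj_ne qi qi_ne hfi
  have hu2i : u2 * qi = qi * u2 := by
    rcases hcase with h | h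
    · rw [h]
    · rw [h, sub_mul, one_mul, mul_sub, mul_one, mul_assoc, hY1i, mul_neg, ← mul_assoc,
        qij_anticomm, neg_mul, neg_neg, mul_assoc]
  -- combine
  have hY1' : u1 * Y = Y1 * u1 := by
    rw [hY1def, mul_assoc (u1 * Y), inv_mul_cancel₀ hu10, mul_one]
  set w := u2 * u1 with hwdef
  have hw0 : w ≠ 0 := mul_ne_zero hu20 hu10
  have hwX : w * X = qi * w := by
    rw [hwdef, mul_assoc, hu1, ← mul_assoc, hu2i, mul_assoc]
  have hwY : w * Y = qj * w := by
    rw [hwdef, mul_assoc, hY1', ← mul_assoc, hu2, mul_assoc]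
  refine ⟨‖w‖⁻¹ • w, ?_, conj_smul w X qi hw0 hwX, conj_smul w Y qj hw0 hwY⟩
  rw [norm_smul, norm_inv, norm_norm, inv_mul_cancel₀ (norm_ne_zero_iff.mpr hw0)]
end
end

section
/- If X, Y are purely imaginary unit quaternions with XY = −YX (anticommuting), then the pair (X,Y) is a fixed point of εσ : (X,Y) ↦ (−Y⁻¹XY, −Y⁻¹X⁻¹YXY); conversely every fixed point consists of anticommuting purely imaginary unit quaternions. -/
open Quaternion Real

noncomputable section

/-- A pair of unit quaternions `(X,Y)` is a fixed point of
`εσ : (X,Y) ↦ (−Y⁻¹XY, −Y⁻¹X⁻¹YXY)` if and only if `X` and `Y` are anticommuting purely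
imaginary unit quaternions. -/
theorem fixed_point_iff_anticommuting (X Y : ℍ[ℝ]) (hX : ‖X‖ = 1) (hY : ‖Y‖ = 1) :
    (X.re = 0 ∧ Y.re = 0 ∧ X * Y = -(Y * X)) ↔
      (-(Y⁻¹ * X * Y) = X ∧ -(Y⁻¹ * X⁻¹ * Y * X * Y) = Y) := by
  have hX0 : X ≠ 0 := by intro h; rw [h, norm_zero] at hX; norm_num at hX
  have hY0 : Y ≠ 0 := by intro h; rw [h, norm_zero] at hY; norm_num at hY
  have hXsq : Quaternion.normSq X = 1 := by
    rw [Quaternion.normSq_eq_norm_mul_self, hX]; norm_num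
  have hYsq : Quaternion.normSq Y = 1 := by
    rw [Quaternion.normSq_eq_norm_mul_self, hY]; norm_num
  constructor
  · rintro ⟨-, -, h⟩
    constructor
    · calc -(Y⁻¹ * X * Y) = -(Y⁻¹ * (X * Y)) := by rw [mul_assoc]
        _ = -(Y⁻¹ * (-(Y * X))) := by rw [h]
        _ = Y⁻¹ * Y * X := by rw [mul_neg, neg_neg, mul_assoc]
        _ = X := by rw [inv_mul_cancel₀ hY0, one_mul]
    · have h2 : X⁻¹ * (Y * X) = -Y := by
        rw [show Y * X = -(X * Y) by rw [h, neg_neg], mul_neg, ← mul_assoc,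
          inv_mul_cancel₀ hX0, one_mul]
      calc -(Y⁻¹ * X⁻¹ * Y * X * Y) = -(Y⁻¹ * (X⁻¹ * (Y * X)) * Y) := by
            simp only [mul_assoc]
        _ = -(Y⁻¹ * (-Y) * Y) := by rw [h2]
        _ = Y⁻¹ * Y * Y := by rw [mul_neg, neg_mul, neg_neg]
        _ = Y := by rw [inv_mul_cancel₀ hY0, one_mul]
  · rintro ⟨h1, -⟩
    have h : X * Y = -(Y * X) := by
      have h2 : Y * -(Y⁻¹ * X * Y) = Y * X := by rw [h1]
      rw [mul_neg, ← mul_assoc, ← mul_assoc, mul_inv_cancel₀ hY0, one_mul] at h2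
      exact neg_eq_iff_eq_neg.mp h2
    have hcopy := h
    rw [Quaternion.ext_iff] at h
    obtain ⟨hre, hi, hj, hk⟩ := h
    simp only [Quaternion.re_mul, Quaternion.imI_mul, Quaternion.imJ_mul,
      Quaternion.imK_mul, Quaternion.re_neg, Quaternion.imI_neg, Quaternion.imJ_neg,
      Quaternion.imK_neg] at hre hi hj hk
    rw [Quaternion.normSq_def'] at hXsq hYsq
    have e0 : X.re*Y.re - (X.imI*Y.imI + X.imJ*Y.imJ + X.imK*Y.imK) = 0 := by linarith
    have e1 : X.re*Y.imI + Y.re*X.imI = 0 := by linarith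
    have e2 : X.re*Y.imJ + Y.re*X.imJ = 0 := by linarith
    have e3 : X.re*Y.imK + Y.re*X.imK = 0 := by linarith
    have hb : Y.re = 0 := by
      linear_combination -(Y.re*hXsq) + X.imI*e1 + X.imJ*e2 + X.imK*e3 + X.re*e0
    have ha : X.re = 0 := by
      linear_combination -(X.re*hYsq) + Y.imI*e1 + Y.imJ*e2 + Y.imK*e3 + X.re*Y.re*hb - (X.imI*Y.imI + X.imJ*Y.imJ + X.imK*Y.imK)*hb
    exact ⟨ha, hb, hcopy⟩
end
end
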